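/- arXiv:2006.07893 — 2 statements merged into one kernel-verified Lean document; each statement's English description precedes it below -/
import Mathlib

section
/- (Giambelli formula in the Laksov–Thorup module) Let ∧ʳV(c) be made a Bᵣ(c)-module by letting hᵢ act as the i-th component σᵢ of the Schubert derivation σ₊(z) (the HS-derivation whose restriction to V(c) is multiplication by Xⁱ). Then for every partition λ = (λ₁ ≥ ... ≥ λᵣ ≥ 0), [X(c)]ʳ_λ := X^{r-1+λ₁}(c) ∧ ⋯ ∧ X^{λᵣ}(c) equals Δ_λ(Hᵣ(c)) · [X(c)]ʳ₀, where Δ_λ(Hᵣ(c)) = det(h_{λⱼ+i-j}(c))_{1≤i,j≤r} is the Schur determinant in the deformed complete symmetric functions hₖ(c), and [X(c)]ʳ₀ = X^{r-1}(c) ∧ ⋯ ∧ X⁰(c). -/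
open PowerSeries Polynomial

set_option synthInstance.maxHeartbeats 1000000
set_option maxHeartbeats 1000000

noncomputable section

abbrev B0 (n : ℕ) : Type := MvPolynomial (Fin n) ℚ
abbrev Br (n r : ℕ) : Type := MvPolynomial (Fin r) (B0 n)

def cc (n : ℕ) : ℕ → B0 n
  | 0 => 1
  | i + 1 => if h : i < n then MvPolynomial.X ⟨i, h⟩ else 0

def ee (n r : ℕ) : ℕ → Br n r
  | 0 => 1
  | i + 1 => if h : i < r then MvPolynomial.X ⟨i, h⟩ else 0

/-- c(z) = ∑ (-1)^i cᵢ zⁱ, viewed over Bᵣ -/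
def cser (n r : ℕ) : PowerSeries (Br n r) :=
  PowerSeries.mk fun i => (-1) ^ i * MvPolynomial.C (cc n i)

/-- Eᵣ(z) = ∑ (-1)^i eᵢ zⁱ -/
def Eser (n r : ℕ) : PowerSeries (Br n r) :=
  PowerSeries.mk fun i => (-1) ^ i * ee n r i

/-- H(z) = 1/Eᵣ(z) -/
def Hser (n r : ℕ) : PowerSeries (Br n r) := (Eser n r).invOfUnit 1

/-- hⱼ : coefficient of zʲ in 1/Eᵣ(z) -/
def hpl (n r : ℕ) (j : ℕ) : Br n r := PowerSeries.coeff j (Hser n r)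

/-- hⱼ(c) : coefficient of zʲ in c(z)/Eᵣ(z) -/
def hcc (n r : ℕ) (j : ℕ) : Br n r := PowerSeries.coeff j (cser n r * Hser n r)

def hplZ (n r : ℕ) (j : ℤ) : Br n r := if 0 ≤ j then hpl n r j.toNat else 0
def hccZ (n r : ℕ) (j : ℤ) : Br n r := if 0 ≤ j then hcc n r j.toNat else 0

/-- the ideal I_{r,n}(c) = (h_{n-r+1}(c),…,hₙ(c)) -/
def Irn (n r : ℕ) : Ideal (Br n r) := Ideal.span (hcc n r '' Set.Icc (n - r + 1) n)

/-- Xʲ(c) = ∑ᵢ (-1)ⁱ cᵢ X^{j-i} -/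
def Xc (n : ℕ) (j : ℕ) : Polynomial (B0 n) :=
  ∑ i ∈ Finset.range (j + 1),
    (-1 : Polynomial (B0 n)) ^ i * Polynomial.C (cc n i) * Polynomial.X ^ (j - i)

/-- the Schur determinant Δ_λ(Hᵣ(c)) -/
def Dl (n r : ℕ) (lam : Fin r → ℕ) : Br n r :=
  Matrix.det (Matrix.of fun i j : Fin r => hccZ n r ((lam j : ℤ) + (i : ℤ) - (j : ℤ)))

abbrev ExtA (n : ℕ) : Type := ExteriorAlgebra (B0 n) (Polynomial (B0 n))

def wedge (n r : ℕ) (g : Fin r → Polynomial (B0 n)) : ExtA n :=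
  ExteriorAlgebra.ιMulti (B0 n) r g

/-- the Laksov–Thorup module structure: eᵢ acts as the component σ̄ᵢ of the
inverse Schubert derivation, i.e. `σ̄(z)(v₁∧⋯∧vᵣ) = ∏ (vⱼ - X·vⱼ z)`. -/
def ActSpec (n r : ℕ)
    (act : Br n r →ₐ[B0 n] Module.End (B0 n) (ExtA n)) : Prop :=
  ∀ (i : Fin r) (g : Fin r → Polynomial (B0 n)),
    act (MvPolynomial.X i) (wedge n r g) =
      ∑ S ∈ Finset.powersetCard ((i : ℕ) + 1) (Finset.univ : Finset (Fin r)),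
        wedge n r fun j => if j ∈ S then Polynomial.X * g j else g j

end

/-! Send `Bᵣ(c)` into `B₀(c)[x₁,…,xᵣ]` by `eᵢ ↦ eᵢ(x)` and let `xⱼ` act on `∧ʳV(c)` as
multiplication by `X` on the `j`-th factor. Since `σ̄(z)` multiplies each factor
by `1 - Xz`, the operator of `p ∈ Bᵣ(c)` becomes multiplication by the image of `p`, and
`v₁ ∧ ⋯ ∧ vᵣ` is the image of `∏ vⱼ(xⱼ)`. Antisymmetrizing, `r! [X(c)]ʳ_λ` is the image of the
alternant `det (X^{r-1-j+λⱼ}(c)(xᵢ))`. From `∏_{l ≠ i} (1 - x_l z) · c(z)/Eᵣ(z) = c(z)/(1 - xᵢ z)`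
one reads off `X^m(c)(xᵢ) = ∑ₐ (-1)ᵃ eₐ(x without xᵢ) h_{m-a}(c)`, so the alternant factors as a
determinant independent of `λ` times `Δ_λ(Hᵣ(c))`, and comparing with `λ = 0` gives the formula
after dividing by `r!`. -/

section MonomialWedge

variable (R : Type*) [CommRing R] (r : ℕ)

noncomputable def monomialWedge : MvPolynomial (Fin r) R →ₗ[R] ExteriorAlgebra R R[X] :=
  (MvPolynomial.basisMonomials (Fin r) R).constr R fun m =>
    ExteriorAlgebra.ιMulti R r fun j => Polynomial.X ^ m j

variable {R r}

theorem monomialWedge_monomial (m : Fin r →₀ ℕ) :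
    monomialWedge R r (MvPolynomial.monomial m 1) =
      ExteriorAlgebra.ιMulti R r fun j => Polynomial.X ^ m j := by
  rw [← congrFun (MvPolynomial.coe_basisMonomials (Fin r) R) m]
  exact (MvPolynomial.basisMonomials (Fin r) R).constr_basis R _ m

theorem monomialWedge_prod_aeval (f : Fin r → R[X]) :
    monomialWedge R r (∏ j, aeval (MvPolynomial.X j) (f j)) = ExteriorAlgebra.ιMulti R r f := by
  suffices h : (monomialWedge R r).compMultilinearMap
      ((MultilinearMap.mkPiAlgebra R (Fin r) (MvPolynomial (Fin r) R)).compLinearMap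
        fun j => (aeval (MvPolynomial.X j)).toLinearMap) =
      (ExteriorAlgebra.ιMulti R r).toMultilinearMap from congr($h f)
  refine Module.Basis.ext_multilinear (fun _ => Polynomial.basisMonomials R) fun k => ?_
  have hk : ∏ j, (MvPolynomial.X j : MvPolynomial (Fin r) R) ^ k j =
      MvPolynomial.monomial (Finsupp.equivFunOnFinite.symm k) 1 := by
    rw [MvPolynomial.monomial_eq, map_one, one_mul, Finsupp.prod_fintype _ _ fun _ => pow_zero _]
    rfl
  simp [Polynomial.coe_basisMonomials, Polynomial.monomial_one_right_eq_X_pow, hk,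
    monomialWedge_monomial]

theorem monomialWedge_rename (σ : Equiv.Perm (Fin r)) (q : MvPolynomial (Fin r) R) :
    monomialWedge R r (MvPolynomial.rename σ q) = Equiv.Perm.sign σ • monomialWedge R r q := by
  suffices h : (monomialWedge R r).comp (MvPolynomial.rename σ).toLinearMap =
      Equiv.Perm.sign σ • monomialWedge R r from congr($h q)
  refine (MvPolynomial.basisMonomials (Fin r) R).ext fun m => ?_
  have hperm := (ExteriorAlgebra.ιMulti R r).map_perm (fun j => (Polynomial.X : R[X]) ^ m j) σ.symm
  simp only [MvPolynomial.coe_basisMonomials, LinearMap.comp_apply, AlgHom.toLinearMap_apply,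
    MvPolynomial.rename_monomial, monomialWedge_monomial, Finsupp.mapDomain_equiv_apply,
    LinearMap.smul_apply]
  rw [← Equiv.Perm.sign_symm, ← hperm]
  rfl

theorem monomialWedge_mul_det {s : MvPolynomial (Fin r) R} (hs : s.IsSymmetric)
    (f : Fin r → R[X]) :
    monomialWedge R r (s * (Matrix.of fun i j => aeval (MvPolynomial.X i) (f j)).det) =
      r.factorial • monomialWedge R r (s * ∏ j, aeval (MvPolynomial.X j) (f j)) := by
  have hterm (σ : Equiv.Perm (Fin r)) :
      s * Equiv.Perm.sign σ • ∏ j, aeval (MvPolynomial.X (σ j)) (f j) =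
        Equiv.Perm.sign σ • MvPolynomial.rename σ (s * ∏ j, aeval (MvPolynomial.X j) (f j)) := by
    simp only [map_mul, hs σ, map_prod, ← Polynomial.aeval_algHom_apply, MvPolynomial.rename_X,
      mul_smul_comm]
  simp only [Matrix.det_apply, Matrix.of_apply, Finset.mul_sum, hterm, map_sum, map_zsmul_unit,
    monomialWedge_rename, smul_smul, Int.units_mul_self, one_smul, Finset.sum_const,
    Finset.card_univ, Fintype.card_perm, Fintype.card_fin]

theorem prod_aeval_X_ite_mem (S : Finset (Fin r)) (g : Fin r → R[X]) :
    ∏ j, aeval (MvPolynomial.X j) (if j ∈ S then Polynomial.X * g j else g j) =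
      (∏ j ∈ S, (MvPolynomial.X j : MvPolynomial (Fin r) R)) *
        ∏ j, aeval (MvPolynomial.X j) (g j) := by
  rw [← Finset.prod_mul_prod_compl S,
    ← Finset.prod_mul_prod_compl S (fun j => Polynomial.aeval (MvPolynomial.X j) (g j)),
    ← mul_assoc, ← Finset.prod_mul_distrib]
  congr 1
  · refine Finset.prod_congr rfl fun j hj => ?_
    rw [if_pos hj, map_mul, Polynomial.aeval_X]
  · exact Finset.prod_congr rfl fun j hj => by rw [if_neg (Finset.mem_compl.mp hj)]

end MonomialWedge

section EsymmHom

variable (B : Type*) [CommRing B] (r : ℕ)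

noncomputable def esymmHom : MvPolynomial (Fin r) B →ₐ[B] MvPolynomial (Fin r) B :=
  MvPolynomial.aeval fun i => MvPolynomial.esymm (Fin r) B (i + 1)

variable {B r}

theorem isSymmetric_esymmHom (p : MvPolynomial (Fin r) B) : (esymmHom B r p).IsSymmetric := by
  have hrange : (esymmHom B r).range ≤ MvPolynomial.symmetricSubalgebra (Fin r) B := by
    rw [esymmHom, MvPolynomial.aeval_range, Algebra.adjoin_le_iff]
    rintro _ ⟨i, rfl⟩
    exact MvPolynomial.esymm_isSymmetric _ _ _
  exact hrange ⟨p, rfl⟩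

end EsymmHom

theorem coeff_prod_one_sub_C_mul_X {A ι : Type*} [CommRing A] (s : Finset ι) (x : ι → A)
    (k : ℕ) :
    PowerSeries.coeff k (∏ l ∈ s, (1 - PowerSeries.C (x l) * PowerSeries.X)) =
      (-1) ^ k * ∑ t ∈ s.powersetCard k, ∏ l ∈ t, x l := by
  classical
  have hterm (t : Finset ι) : ∏ l ∈ t, -(PowerSeries.C (x l) * PowerSeries.X) =
      PowerSeries.C ((-1) ^ t.card * ∏ l ∈ t, x l) * PowerSeries.X ^ t.card := by
    rw [Finset.prod_neg, Finset.prod_mul_distrib, Finset.prod_const, ← map_prod, map_mul, map_pow,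
      map_neg, map_one, mul_assoc]
  simp_rw [sub_eq_add_neg, Finset.prod_one_add, hterm, map_sum, PowerSeries.coeff_C_mul_X_pow,
    Finset.powersetCard_eq_filter, Finset.sum_filter, Finset.mul_sum]
  exact Finset.sum_congr rfl fun t _ => by split_ifs <;> simp_all

theorem one_sub_C_mul_X_mul_rescale_mk_one {A : Type*} [CommRing A] (y : A) :
    (1 - PowerSeries.C y * PowerSeries.X) * PowerSeries.rescale y (PowerSeries.mk 1) = 1 := by
  rw [← PowerSeries.rescale_X, ← map_one (PowerSeries.rescale y), ← map_sub, ← map_mul, mul_comm,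
    PowerSeries.mk_one_mul_one_sub_eq_one, map_one]

section Giambelli

variable {n r : ℕ}

theorem act_wedge_eq_monomialWedge {act : Br n r →ₐ[B0 n] Module.End (B0 n) (ExtA n)}
    (hact : ActSpec n r act) (p : Br n r) (g : Fin r → (B0 n)[X]) :
    act p (wedge n r g) =
      monomialWedge (B0 n) r (esymmHom (B0 n) r p * ∏ j, aeval (MvPolynomial.X j) (g j)) := by
  induction p using MvPolynomial.induction_on generalizing g with
  | C a =>
    rw [← MvPolynomial.algebraMap_eq, AlgHom.commutes, AlgHom.commutes,
      Module.algebraMap_end_apply, MvPolynomial.algebraMap_eq, ← MvPolynomial.smul_eq_C_mul,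
      map_smul, monomialWedge_prod_aeval]
    rfl
  | add p q hp hq => rw [map_add, map_add, LinearMap.add_apply, hp, hq, add_mul, map_add]
  | mul_X p i hp =>
    rw [map_mul, Module.End.mul_apply, hact, map_sum]
    simp only [hp, prod_aeval_X_ite_mem, ← mul_assoc]
    rw [← map_sum, ← Finset.sum_mul, ← Finset.mul_sum, map_mul (esymmHom (B0 n) r), esymmHom,
      MvPolynomial.aeval_X, MvPolynomial.esymm]

theorem esymmHom_ee (k : ℕ) :
    esymmHom (B0 n) r (ee n r k) = MvPolynomial.esymm (Fin r) (B0 n) k := by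
  rcases k with _ | k
  · rw [ee, map_one, MvPolynomial.esymm_zero]
  · by_cases hk : k < r
    · rw [ee, dif_pos hk, esymmHom, MvPolynomial.aeval_X]
    · rw [ee, dif_neg hk, map_zero, MvPolynomial.esymm,
        Finset.powersetCard_eq_empty.mpr (by simp only [Finset.card_univ, Fintype.card_fin]; omega),
        Finset.sum_empty]

theorem map_esymmHom_Eser :
    PowerSeries.map (esymmHom (B0 n) r).toRingHom (Eser n r) =
      ∏ l, (1 - PowerSeries.C (MvPolynomial.X l : Br n r) * PowerSeries.X) := by
  ext k
  rw [PowerSeries.coeff_map, coeff_prod_one_sub_C_mul_X, Eser, PowerSeries.coeff_mk]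
  simp [esymmHom_ee, MvPolynomial.esymm]

theorem map_esymmHom_cser :
    PowerSeries.map (esymmHom (B0 n) r).toRingHom (cser n r) = cser n r := by
  ext k
  simp [cser]

theorem Eser_mul_Hser : Eser n r * Hser n r = 1 :=
  PowerSeries.mul_invOfUnit _ 1 (by simp [Eser, ee])

noncomputable def EserErase (i : Fin r) : PowerSeries (Br n r) :=
  ∏ l ∈ Finset.univ.erase i, (1 - PowerSeries.C (MvPolynomial.X l : Br n r) * PowerSeries.X)

theorem coeff_EserErase_of_le (i : Fin r) {a : ℕ} (ha : r ≤ a) :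
    PowerSeries.coeff a (EserErase (n := n) i) = 0 := by
  rw [EserErase, coeff_prod_one_sub_C_mul_X, Finset.powersetCard_eq_empty.mpr, Finset.sum_empty,
    mul_zero]
  simp only [Finset.mem_univ, Finset.card_erase_of_mem, Finset.card_univ, Fintype.card_fin]
  have := i.pos
  omega

theorem EserErase_mul_map_hcc (i : Fin r) :
    EserErase i * PowerSeries.map (esymmHom (B0 n) r).toRingHom (cser n r * Hser n r) =
      cser n r * PowerSeries.rescale (MvPolynomial.X i) (PowerSeries.mk 1) := by
  have hE : PowerSeries.map (esymmHom (B0 n) r).toRingHom (Eser n r) =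
      (1 - PowerSeries.C (MvPolynomial.X i : Br n r) * PowerSeries.X) * EserErase i := by
    rw [map_esymmHom_Eser, EserErase]
    exact (Finset.mul_prod_erase _ _ (Finset.mem_univ i)).symm
  calc EserErase i * PowerSeries.map (esymmHom (B0 n) r).toRingHom (cser n r * Hser n r)
      = EserErase i * PowerSeries.map (esymmHom (B0 n) r).toRingHom (cser n r * Hser n r) *
          ((1 - PowerSeries.C (MvPolynomial.X i : Br n r) * PowerSeries.X) *
            PowerSeries.rescale (MvPolynomial.X i) (PowerSeries.mk 1)) := by
        rw [one_sub_C_mul_X_mul_rescale_mk_one, mul_one]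
    _ = PowerSeries.map (esymmHom (B0 n) r).toRingHom (cser n r * (Eser n r * Hser n r)) *
          PowerSeries.rescale (MvPolynomial.X i) (PowerSeries.mk 1) := by
        simp only [map_mul, hE]
        ring
    _ = cser n r * PowerSeries.rescale (MvPolynomial.X i) (PowerSeries.mk 1) := by
        rw [Eser_mul_Hser, mul_one, map_esymmHom_cser]

theorem aeval_Xc_eq_coeff (y : Br n r) (m : ℕ) :
    aeval y (Xc n m) =
      PowerSeries.coeff m (cser n r * PowerSeries.rescale y (PowerSeries.mk 1)) := by
  rw [Xc, map_sum, PowerSeries.coeff_mul, Finset.Nat.sum_antidiagonal_eq_sum_range_succ_mk]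
  refine Finset.sum_congr rfl fun a _ => ?_
  simp [cser, PowerSeries.coeff_rescale]

theorem hccZ_of_neg {j : ℤ} (hj : j < 0) : hccZ n r j = 0 := if_neg (by omega)

theorem aeval_X_Xc_eq_sum (i : Fin r) (m : ℕ) :
    aeval (MvPolynomial.X i) (Xc n m) =
      ∑ a ∈ Finset.range r,
        PowerSeries.coeff a (EserErase i) * esymmHom (B0 n) r (hccZ n r (m - a)) := by
  rw [aeval_Xc_eq_coeff, ← EserErase_mul_map_hcc, PowerSeries.coeff_mul,
    Finset.Nat.sum_antidiagonal_eq_sum_range_succ_mk]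
  have hvanish : ∀ a ≥ min (m + 1) r,
      PowerSeries.coeff a (EserErase i) * esymmHom (B0 n) r (hccZ n r (m - a)) = 0 := by
    intro a ha
    rcases min_le_iff.mp ha with ha | ha
    · rw [hccZ_of_neg (by omega), map_zero, mul_zero]
    · rw [coeff_EserErase_of_le i ha, zero_mul]
  rw [Finset.eventually_constant_sum hvanish (min_le_right _ _),
    ← Finset.eventually_constant_sum hvanish (min_le_left _ _)]
  refine Finset.sum_congr rfl fun a ha => ?_
  rw [PowerSeries.coeff_map, hccZ, if_pos (by simp at ha; omega), hcc,
    show ((m : ℤ) - a).toNat = m - a by omega]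
  rfl

theorem det_aeval_X_Xc_eq_det_mul (lam : Fin r → ℕ) :
    (Matrix.of fun i j : Fin r => aeval (MvPolynomial.X i) (Xc n (r - 1 - j + lam j))).det =
      (Matrix.of fun i l : Fin r => PowerSeries.coeff (r - 1 - l) (EserErase i)).det *
        esymmHom (B0 n) r (Dl n r lam) := by
  rw [Dl, ← AlgHom.coe_toRingHom, RingHom.map_det, ← Matrix.det_mul]
  refine congrArg Matrix.det (Matrix.ext fun i j => ?_)
  rw [Matrix.mul_apply, Matrix.of_apply, aeval_X_Xc_eq_sum, Finset.sum_range,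
    ← Equiv.sum_comp Fin.revPerm]
  refine Finset.sum_congr rfl fun l _ => ?_
  rw [RingHom.mapMatrix_apply, Matrix.map_apply, Matrix.of_apply, Matrix.of_apply,
    Fin.revPerm_apply, Fin.val_rev, AlgHom.coe_toRingHom]
  congr 3 <;> omega

theorem Dl_zero : Dl n r 0 = 1 := by
  have hlower : (Matrix.of fun i j : Fin r =>
      hccZ n r (((0 : Fin r → ℕ) j : ℤ) + i - j)).IsLowerTriangular :=
    fun i j hij => hccZ_of_neg (by have := OrderDual.toDual_lt_toDual.mp hij; simp; omega)
  rw [Dl, Matrix.det_of_isLowerTriangular _ hlower]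
  refine Finset.prod_eq_one fun i _ => ?_
  rw [Matrix.of_apply, hccZ, if_pos (by simp)]
  simp [hcc, Hser, cser, cc]

theorem det_aeval_X_Xc_add_eq_mul (lam : Fin r → ℕ) :
    (Matrix.of fun i j : Fin r => aeval (MvPolynomial.X i) (Xc n (r - 1 - j + lam j))).det =
      esymmHom (B0 n) r (Dl n r lam) *
        (Matrix.of fun i j : Fin r => aeval (MvPolynomial.X i) (Xc n (r - 1 - j))).det := by
  have h0 := det_aeval_X_Xc_eq_det_mul (n := n) (0 : Fin r → ℕ)
  simp only [Pi.zero_apply, add_zero, Dl_zero, map_one, mul_one] at h0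
  rw [det_aeval_X_Xc_eq_det_mul, h0, mul_comm]

end Giambelli

theorem stmt8_general (n r : ℕ)
    (act : Br n r →ₐ[B0 n] Module.End (B0 n) (ExtA n)) (hact : ActSpec n r act)
    (lam : Fin r → ℕ) :
    wedge n r (fun j => Xc n (r - 1 - (j : ℕ) + lam j)) =
      act (Dl n r lam) (wedge n r fun j => Xc n (r - 1 - (j : ℕ))) := by
  have : IsAddTorsionFree (ExtA n) := .of_module_rat _
  refine nsmul_right_injective (Nat.factorial_ne_zero r) ?_
  calc r.factorial • wedge n r (fun j => Xc n (r - 1 - (j : ℕ) + lam j))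
      = r.factorial • monomialWedge (B0 n) r
          (1 * ∏ j : Fin r, aeval (MvPolynomial.X j) (Xc n (r - 1 - (j : ℕ) + lam j))) := by
        rw [one_mul, monomialWedge_prod_aeval, wedge]
    _ = monomialWedge (B0 n) r (1 * (Matrix.of fun i j : Fin r =>
          aeval (MvPolynomial.X i) (Xc n (r - 1 - j + lam j))).det) :=
        (monomialWedge_mul_det MvPolynomial.IsSymmetric.one _).symm
    _ = monomialWedge (B0 n) r (esymmHom (B0 n) r (Dl n r lam) * (Matrix.of fun i j : Fin r =>
          aeval (MvPolynomial.X i) (Xc n (r - 1 - j))).det) := by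
        rw [one_mul, det_aeval_X_Xc_add_eq_mul]
    _ = r.factorial • act (Dl n r lam) (wedge n r fun j => Xc n (r - 1 - (j : ℕ))) := by
        rw [monomialWedge_mul_det (isSymmetric_esymmHom _), act_wedge_eq_monomialWedge hact]

/-- Giambelli's formula [X(c)]ʳ_λ = Δ_λ(Hᵣ(c))·[X(c)]ʳ₀ in the
Laksov–Thorup Bᵣ(c)-module structure on ∧ʳV(c). -/
theorem stmt8 (n r : ℕ)
    (act : Br n r →ₐ[B0 n] Module.End (B0 n) (ExtA n)) (hact : ActSpec n r act)
    (lam : Fin r → ℕ) (hlam : Antitone lam) :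
    wedge n r (fun j => Xc n (r - 1 - (j : ℕ) + lam j)) =
      act (Dl n r lam) (wedge n r fun j => Xc n (r - 1 - (j : ℕ))) :=
  stmt8_general n r act hact lam
end

section
/- (Main theorem, explicit case n=4, r=2) In the universal decomposition algebra B_{2,4}(c), the action of the generating function ℰ₄(z,w⁻¹) = ∑_{i,j=0}³ Xⁱ(c)⊗∂ʲ(s) zⁱw⁻ʲ on the Schur element Δ_{(2,1)}(H_{2,4}(c)) equals h₂(c)/w + Δ_{(2,1)}(H_{2,4}(c))·z/w + Δ_{(2,2)}(H_{2,4}(c))·z²/w − 1/w³ + Δ_{(1,1)}(H_{2,4}(c))·z²/w³ + Δ_{(2,1)}(H_{2,4}(c))·z³/w³. Equivalently, the coefficient of z²w⁻¹ is h₂(c)², matching the direct computation (X²(c)⊗∂¹(s))⋆Δ_{(2,1)}(H_{2,4}(c)) = h₂(c)². -/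
open PowerSeries Polynomial

set_option synthInstance.maxHeartbeats 1000000
set_option maxHeartbeats 1000000

noncomputable section

/-- s(w) = 1/c(w) ∈ B₀(c)[[w]] : sᵢ is the i-th coefficient. -/
def sc (n : ℕ) (i : ℕ) : B0 n :=
  PowerSeries.coeff i ((PowerSeries.mk fun i => (-1) ^ i * cc n i).invOfUnit 1)

/-- ∂ʲ(s) = ∑ᵢ sᵢ ∂^{i+j} : the coefficient of w⁻ʲ in s(w)∂(w⁻¹), defined by its
values ∂ʲ(s)(Xⁱ) = s_{i-j} (for i ≥ j) on the monomial basis. -/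
def ds (n : ℕ) (j : ℕ) : Polynomial (B0 n) →ₗ[B0 n] B0 n :=
  (Polynomial.basisMonomials (B0 n)).constr (B0 n)
    (fun i => if j ≤ i then sc n (i - j) else 0)

end
noncomputable section
/-- the coefficient of zⁱw⁻ʲ in ℰ₄(z,w⁻¹)(Δ_{(2,1)}(H_{2,4}(c))), as an element
of B_{2,4}(c): h₂(c)/w + Δ_{(2,1)}z/w + Δ_{(2,2)}z²/w − 1/w³ + Δ_{(1,1)}z²/w³
+ Δ_{(2,1)}z³/w³. -/
def table (i j : ℕ) : Br 4 2 ⧸ Irn 4 2 :=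
  if j = 1 then
    (if i = 0 then Ideal.Quotient.mk (Irn 4 2) (hcc 4 2 2)
     else if i = 1 then Ideal.Quotient.mk (Irn 4 2) (Dl 4 2 ![2, 1])
     else if i = 2 then Ideal.Quotient.mk (Irn 4 2) (Dl 4 2 ![2, 2]) else 0)
  else if j = 3 then
    (if i = 0 then -1
     else if i = 2 then Ideal.Quotient.mk (Irn 4 2) (Dl 4 2 ![1, 1])
     else if i = 3 then Ideal.Quotient.mk (Irn 4 2) (Dl 4 2 ![2, 1]) else 0)
  else 0
end


/-!
Put `e₁ = x₀ + x₁`, `e₂ = x₀ x₁`. Evaluating `v₁ ∧ v₂ ∈ ∧² B₀(c)[X]` at the two roots gives the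
alternant `v₁(x₀) v₂(x₁) - v₁(x₁) v₂(x₀)`, and the Laksov–Thorup module structure turns the action
of `u ∈ B₂(c)` into multiplication by `u(x₀ + x₁, x₀ x₁)`. The base point `X¹(c) ∧ X⁰(c)` has
alternant `x₀ - x₁`, a nonzerodivisor, and `u ↦ u(x₀ + x₁, x₀ x₁)` is injective (fundamental
theorem of symmetric polynomials), so `u` is determined by the alternant of the right-hand side.
Since `∂ʲ(s)` is dual to `Xⁱ(c)` (because `s(w) = 1/c(w)`), that right-hand side is
`δ_{j1} X³(c) ∧ Xⁱ(c) + δ_{j3} Xⁱ(c) ∧ X¹(c)`, and each entry of the table is an instance of the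
bialternant formula `Δ_λ(H(c)) (x₀ - x₁) = X^{λ₁+1}(c)(x₀) X^{λ₂}(c)(x₁) - (x₀ ↔ x₁)`, which holds
already in `B₂(c)`, before passing to the quotient.
-/

noncomputable section Alternant

variable {R S : Type*} [CommRing R] [CommRing S] [Algebra R S]

theorem ExteriorAlgebra.contractLeft_ι_mul_ι {M : Type*} [AddCommGroup M] [Module R M]
    (d : Module.Dual R M) (p q : M) :
    CliffordAlgebra.contractLeft (Q := (0 : QuadraticForm R M)) d (ι R p * ι R q) =
      d p • ι R q - d q • ι R p := by
  rw [ExteriorAlgebra.ι, CliffordAlgebra.contractLeft_ι_mul, CliffordAlgebra.contractLeft_ι,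
    Algebra.algebraMap_eq_smul_one, mul_smul_comm, mul_one]

def alternantForm (a b : S) : R[X] [⋀^Fin 2]→ₗ[R] S where
  toMultilinearMap :=
    ((Matrix.detRowAlternating : (Fin 2 → S) [⋀^Fin 2]→ₗ[S] S).toMultilinearMap.restrictScalars
      R).compLinearMap fun _ => LinearMap.pi ![(aeval a).toLinearMap, (aeval b).toLinearMap]
  map_eq_zero_of_eq' v i j h hij :=
    Matrix.detRowAlternating.map_eq_zero_of_eq _ (by simp [h]) hij

def alternant (a b : S) : ExteriorAlgebra R R[X] →ₗ[R] S :=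
  ExteriorAlgebra.liftAlternating (Pi.single 2 (alternantForm a b))

theorem alternant_ιMulti (a b : S) (v : Fin 2 → R[X]) :
    alternant a b (ExteriorAlgebra.ιMulti R 2 v) =
      aeval a (v 0) * aeval b (v 1) - aeval b (v 0) * aeval a (v 1) := by
  rw [alternant, ExteriorAlgebra.liftAlternating_apply_ιMulti, Pi.single_eq_same]
  change Matrix.det (Matrix.of fun i j => LinearMap.pi ![(aeval a).toLinearMap,
    (aeval b).toLinearMap] (v i) j) = _
  simp [Matrix.det_fin_two]

theorem alternant_ι_mul_ι (a b : S) (p q : R[X]) :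
    alternant a b (ExteriorAlgebra.ι R p * ExteriorAlgebra.ι R q) =
      aeval a p * aeval b q - aeval b p * aeval a q := by
  simpa [ExteriorAlgebra.ιMulti_apply] using alternant_ιMulti a b ![p, q]

end Alternant

noncomputable section

namespace MvPolynomial

variable (R : Type*) [CommRing R] (r : ℕ)

def esymmEval : MvPolynomial (Fin r) R →ₐ[R] MvPolynomial (Fin r) R :=
  aeval fun i => esymm (Fin r) R (i + 1)

theorem esymmEval_injective : Function.Injective (esymmEval R r) := fun p q h =>
  esymmAlgHom_fin_injective R le_rfl <| Subtype.ext <| by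
    rwa [esymmAlgHom_apply, esymmAlgHom_apply]

variable {R}

@[simp]
theorem esymmEval_C (a : R) : esymmEval R r (C a) = C a := aeval_C _ _

@[simp]
theorem esymmEval_X_zero : esymmEval R 2 (X 0) = X 0 + X 1 := by
  rw [esymmEval, aeval_X, Fin.val_zero, zero_add, esymm_one, Fin.sum_univ_two]

@[simp]
theorem esymmEval_X_one : esymmEval R 2 (X 1) = X 0 * X 1 := by
  rw [esymmEval, aeval_X, esymm, Fin.val_one,
    show 1 + 1 = (Finset.univ : Finset (Fin 2)).card from rfl, Finset.powersetCard_self,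
    Finset.sum_singleton, Fin.prod_univ_two]

end MvPolynomial

end

theorem PowerSeries.sum_coeff_mul_coeff_invOfUnit {A : Type*} [CommRing A] (f : A⟦X⟧)
    (hf : constantCoeff f = 1) (m : ℕ) :
    ∑ i ∈ Finset.range (m + 1), coeff i f * coeff (m - i) (f.invOfUnit 1) =
      if m = 0 then 1 else 0 := by
  have h := congrArg (coeff m) (mul_invOfUnit f 1 (by simp [hf]))
  rwa [coeff_mul, Finset.Nat.sum_antidiagonal_eq_sum_range_succ_mk, coeff_one] at h

section SymmetricFunctions

variable (n : ℕ)

local notation "e₁" => (MvPolynomial.X 0 : Br _ 2)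
local notation "e₂" => (MvPolynomial.X 1 : Br _ 2)
local notation "c" k:max => (MvPolynomial.C (cc n k) : Br n 2)

@[simp]
theorem cc_zero : cc n 0 = 1 := rfl

theorem sum_cc_mul_sc (m : ℕ) :
    ∑ i ∈ Finset.range (m + 1), (-1) ^ i * cc n i * sc n (m - i) = if m = 0 then 1 else 0 := by
  simpa [sc] using PowerSeries.sum_coeff_mul_coeff_invOfUnit
    (PowerSeries.mk fun i => (-1) ^ i * cc n i) (by simp [cc]) m

theorem sum_ee_mul_hpl (r m : ℕ) :
    ∑ i ∈ Finset.range (m + 1), (-1) ^ i * ee n r i * hpl n r (m - i) =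
      if m = 0 then 1 else 0 := by
  simpa [hpl, Hser, Eser] using PowerSeries.sum_coeff_mul_coeff_invOfUnit
    (Eser n r) (by simp [Eser, ee]) m

theorem hcc_eq_sum (r m : ℕ) :
    hcc n r m =
      ∑ i ∈ Finset.range (m + 1), (-1) ^ i * MvPolynomial.C (cc n i) * hpl n r (m - i) := by
  rw [hcc, PowerSeries.coeff_mul, Finset.Nat.sum_antidiagonal_eq_sum_range_succ_mk]
  simp [cser, hpl]

theorem hpl_two_zero : hpl n 2 0 = 1 := by
  simpa [ee] using sum_ee_mul_hpl n 2 0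

theorem hpl_two_one : hpl n 2 1 = e₁ := by
  have h := sum_ee_mul_hpl n 2 1
  simp [Finset.sum_range_succ, ee, hpl_two_zero] at h
  linear_combination h

theorem hpl_two_two : hpl n 2 2 = e₁ ^ 2 - e₂ := by
  have h := sum_ee_mul_hpl n 2 2
  simp [Finset.sum_range_succ, ee, hpl_two_zero, hpl_two_one] at h
  linear_combination h

theorem hpl_two_three : hpl n 2 3 = e₁ ^ 3 - 2 * e₁ * e₂ := by
  have h := sum_ee_mul_hpl n 2 3
  simp [Finset.sum_range_succ, ee, hpl_two_zero, hpl_two_one, hpl_two_two] at h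
  linear_combination h

theorem hcc_two_zero : hcc n 2 0 = 1 := by
  simp [hcc_eq_sum, hpl_two_zero]

theorem hcc_two_one : hcc n 2 1 = e₁ - c 1 := by
  simp [hcc_eq_sum, Finset.sum_range_succ, hpl_two_zero, hpl_two_one]
  ring

theorem hcc_two_two : hcc n 2 2 = e₁ ^ 2 - e₂ - c 1 * e₁ + c 2 := by
  simp [hcc_eq_sum, Finset.sum_range_succ, hpl_two_zero, hpl_two_one, hpl_two_two]
  ring

theorem hcc_two_three :
    hcc n 2 3 = e₁ ^ 3 - 2 * e₁ * e₂ - c 1 * (e₁ ^ 2 - e₂) + c 2 * e₁ - c 3 := by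
  simp [hcc_eq_sum, Finset.sum_range_succ, hpl_two_zero, hpl_two_one, hpl_two_two,
    hpl_two_three]
  ring

theorem Dl_two_one : Dl n 2 ![2, 1] = hcc n 2 2 * hcc n 2 1 - hcc n 2 3 := by
  simp [Dl, Matrix.det_fin_two, hccZ, hcc_two_zero]

theorem Dl_two_two : Dl n 2 ![2, 2] = hcc n 2 2 ^ 2 - hcc n 2 1 * hcc n 2 3 := by
  simp [Dl, Matrix.det_fin_two, hccZ]
  ring

theorem Dl_one_one : Dl n 2 ![1, 1] = hcc n 2 1 ^ 2 - hcc n 2 2 := by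
  simp [Dl, Matrix.det_fin_two, hccZ, hcc_two_zero]
  ring

end SymmetricFunctions

section Duality

variable (n : ℕ)

theorem Xc_zero : Xc n 0 = 1 := by
  simp [Xc]

theorem Xc_one : Xc n 1 = Polynomial.X - Polynomial.C (cc n 1) := by
  simp [Xc, Finset.sum_range_succ]
  ring

theorem Xc_two :
    Xc n 2 = Polynomial.X ^ 2 - Polynomial.C (cc n 1) * Polynomial.X + Polynomial.C (cc n 2) := by
  simp [Xc, Finset.sum_range_succ]
  ring

theorem Xc_three : Xc n 3 = Polynomial.X ^ 3 - Polynomial.C (cc n 1) * Polynomial.X ^ 2 +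
      Polynomial.C (cc n 2) * Polynomial.X - Polynomial.C (cc n 3) := by
  simp [Xc, Finset.sum_range_succ]
  ring

theorem ds_X_pow (j i : ℕ) : ds n j (Polynomial.X ^ i) = if j ≤ i then sc n (i - j) else 0 := by
  have h : (Polynomial.X ^ i : (B0 n)[X]) = basisMonomials (B0 n) i := by
    rw [coe_basisMonomials, ← monomial_one_right_eq_X_pow]
  rw [ds, h, Module.Basis.constr_basis]

theorem ds_Xc (j k : ℕ) : ds n j (Xc n k) = if j = k then 1 else 0 := by
  have hterm (i : ℕ) : ds n j ((-1) ^ i * Polynomial.C (cc n i) * Polynomial.X ^ (k - i)) =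
      (-1) ^ i * cc n i * if j ≤ k - i then sc n (k - i - j) else 0 := by
    rw [← Polynomial.C_1, ← Polynomial.C_neg, ← Polynomial.C_pow, ← Polynomial.C_mul,
      ← Polynomial.smul_eq_C_mul, map_smul, ds_X_pow, smul_eq_mul]
  simp_rw [Xc, map_sum, hterm]
  rcases le_or_gt j k with hjk | hkj
  · obtain ⟨m, rfl⟩ := Nat.exists_eq_add_of_le hjk
    have hlow : ∀ i ∈ Finset.range (m + 1),
        (-1) ^ i * cc n i * (if j ≤ j + m - i then sc n (j + m - i - j) else 0) =
          (-1) ^ i * cc n i * sc n (m - i) := fun i hi => by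
      rw [Finset.mem_range] at hi
      rw [if_pos (by omega), show j + m - i - j = m - i by omega]
    have hhigh : ∀ t ∈ Finset.range j, (-1) ^ (m + 1 + t) * cc n (m + 1 + t) *
        (if j ≤ j + m - (m + 1 + t) then sc n (j + m - (m + 1 + t) - j) else 0) = 0 :=
      fun t ht => by rw [Finset.mem_range] at ht; rw [if_neg (by omega), mul_zero]
    rw [show j + m + 1 = m + 1 + j by omega, Finset.sum_range_add, Finset.sum_congr rfl hlow,
      Finset.sum_eq_zero hhigh, add_zero, sum_cc_mul_sc]
    simp
  · rw [if_neg hkj.ne', Finset.sum_eq_zero]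
    intro i _
    rw [if_neg (by omega), mul_zero]

end Duality

noncomputable section

/-- The variables of `Br n 2` play here the roots `x₀, x₁` (with `e₁ = x₀ + x₁`, `e₂ = x₀ x₁`),
not `e₁, e₂`. -/
abbrev rootAlternant (n : ℕ) : ExtA n →ₗ[B0 n] Br n 2 :=
  alternant (MvPolynomial.X 0) (MvPolynomial.X 1)

variable {n : ℕ}

section Action

variable {act : Br n 2 →ₐ[B0 n] Module.End (B0 n) (ExtA n)}

theorem act_X_wedge_mem (hact : ActSpec n 2 act) (i : Fin 2) (g : Fin 2 → (B0 n)[X]) :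
    act (MvPolynomial.X i) (wedge n 2 g) ∈ ⋀[B0 n]^2 (B0 n)[X] := by
  rw [hact i g]
  exact Submodule.sum_mem _ fun S _ => ExteriorAlgebra.ιMulti_range _ _ ⟨_, rfl⟩

theorem rootAlternant_act_X_wedge (hact : ActSpec n 2 act) (i : Fin 2) (g : Fin 2 → (B0 n)[X]) :
    rootAlternant n (act (MvPolynomial.X i) (wedge n 2 g)) =
      MvPolynomial.esymmEval (B0 n) 2 (MvPolynomial.X i) * rootAlternant n (wedge n 2 g) := by
  rw [hact i g]
  fin_cases i
  · rw [show Finset.powersetCard 1 (Finset.univ : Finset (Fin 2)) = {{0}, {1}} by decide,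
      Finset.sum_pair (by decide), map_add]
    simp only [wedge, alternant_ιMulti]
    simp
    ring
  · rw [show Finset.powersetCard 2 (Finset.univ : Finset (Fin 2)) = {Finset.univ} by decide,
      Finset.sum_singleton]
    simp only [wedge, alternant_ιMulti]
    simp
    ring

theorem rootAlternant_act_X_of_mem (hact : ActSpec n 2 act) (i : Fin 2) {m : ExtA n}
    (hm : m ∈ ⋀[B0 n]^2 (B0 n)[X]) :
    act (MvPolynomial.X i) m ∈ ⋀[B0 n]^2 (B0 n)[X] ∧
      rootAlternant n (act (MvPolynomial.X i) m) =
        MvPolynomial.esymmEval (B0 n) 2 (MvPolynomial.X i) * rootAlternant n m := by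
  rw [← ExteriorAlgebra.ιMulti_span_fixedDegree] at hm
  induction hm using Submodule.span_induction with
  | mem x hx =>
    obtain ⟨g, rfl⟩ := hx
    exact ⟨act_X_wedge_mem hact i g, rootAlternant_act_X_wedge hact i g⟩
  | zero => simp
  | add x y _ _ hx hy =>
    rw [map_add, map_add, hx.2, hy.2, map_add, mul_add]
    exact ⟨add_mem hx.1 hy.1, rfl⟩
  | smul b x _ hx =>
    rw [map_smul, map_smul, hx.2, map_smul, mul_smul_comm]
    exact ⟨Submodule.smul_mem _ b hx.1, rfl⟩

theorem rootAlternant_act_of_mem (hact : ActSpec n 2 act) (u : Br n 2) :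
    ∀ m ∈ ⋀[B0 n]^2 (B0 n)[X], act u m ∈ ⋀[B0 n]^2 (B0 n)[X] ∧
      rootAlternant n (act u m) = MvPolynomial.esymmEval (B0 n) 2 u * rootAlternant n m := by
  induction u using MvPolynomial.induction_on with
  | C a =>
    intro m hm
    have hC : act (MvPolynomial.C a) m = a • m := by
      rw [← MvPolynomial.algebraMap_eq, act.commutes, Module.algebraMap_end_apply]
    rw [hC, map_smul, MvPolynomial.esymmEval_C, MvPolynomial.smul_eq_C_mul]
    exact ⟨Submodule.smul_mem _ a hm, rfl⟩
  | add p q hp hq =>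
    intro m hm
    rw [map_add, LinearMap.add_apply, map_add, map_add, add_mul, (hp m hm).2, (hq m hm).2]
    exact ⟨add_mem (hp m hm).1 (hq m hm).1, rfl⟩
  | mul_X p i hp =>
    intro m hm
    obtain ⟨hXm, hXm_alt⟩ := rootAlternant_act_X_of_mem hact i hm
    obtain ⟨hpXm, hpXm_alt⟩ := hp _ hXm
    rw [map_mul, Module.End.mul_apply, map_mul, hpXm_alt, hXm_alt, mul_assoc]
    exact ⟨hpXm, rfl⟩

theorem rootAlternant_act_wedge (hact : ActSpec n 2 act) (u : Br n 2) (g : Fin 2 → (B0 n)[X]) :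
    rootAlternant n (act u (wedge n 2 g)) =
      MvPolynomial.esymmEval (B0 n) 2 u * rootAlternant n (wedge n 2 g) :=
  (rootAlternant_act_of_mem hact u _ (ExteriorAlgebra.ιMulti_range _ _ ⟨g, rfl⟩)).2

end Action

theorem rootAlternant_wedge_Xc_one_zero :
    rootAlternant n (wedge n 2 ![Xc n 1, Xc n 0]) = MvPolynomial.X 0 - MvPolynomial.X 1 := by
  simp only [wedge, alternant_ιMulti, Xc_one, Xc_zero]
  simp

theorem eq_of_rootAlternant_act_eq {act : Br n 2 →ₐ[B0 n] Module.End (B0 n) (ExtA n)}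
    (hact : ActSpec n 2 act) {u u₀ : Br n 2}
    (h : rootAlternant n (act u (wedge n 2 ![Xc n 1, Xc n 0])) =
      MvPolynomial.esymmEval (B0 n) 2 u₀ * (MvPolynomial.X 0 - MvPolynomial.X 1)) :
    u = u₀ := by
  rw [rootAlternant_act_wedge hact, rootAlternant_wedge_Xc_one_zero] at h
  have hΔ : (MvPolynomial.X 0 - MvPolynomial.X 1 : Br n 2) ≠ 0 :=
    sub_ne_zero.2 (MvPolynomial.X_injective.ne (by decide))
  exact MvPolynomial.esymmEval_injective _ _ (mul_right_cancel₀ hΔ h)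

end

section Bialternants

variable (n : ℕ)

local notation "Δ" => (MvPolynomial.X 0 - MvPolynomial.X 1 : Br n 2)
local notation "σ" => MvPolynomial.esymmEval (B0 n) 2

theorem rootAlternant_Xc_three_Xc_zero :
    rootAlternant n (ExteriorAlgebra.ι _ (Xc n 3) * ExteriorAlgebra.ι _ (Xc n 0)) =
      σ (hcc n 2 2) * Δ := by
  rw [alternant_ι_mul_ι, hcc_two_two, Xc_three, Xc_zero]
  simp
  ring

theorem rootAlternant_Xc_three_Xc_one :
    rootAlternant n (ExteriorAlgebra.ι _ (Xc n 3) * ExteriorAlgebra.ι _ (Xc n 1)) =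
      σ (Dl n 2 ![2, 1]) * Δ := by
  rw [alternant_ι_mul_ι, Dl_two_one, hcc_two_one, hcc_two_two, hcc_two_three, Xc_three, Xc_one]
  simp [map_ofNat]
  ring

theorem rootAlternant_Xc_three_Xc_two :
    rootAlternant n (ExteriorAlgebra.ι _ (Xc n 3) * ExteriorAlgebra.ι _ (Xc n 2)) =
      σ (Dl n 2 ![2, 2]) * Δ := by
  rw [alternant_ι_mul_ι, Dl_two_two, hcc_two_one, hcc_two_two, hcc_two_three, Xc_three, Xc_two]
  simp [map_ofNat]
  ring

theorem rootAlternant_Xc_two_Xc_one :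
    rootAlternant n (ExteriorAlgebra.ι _ (Xc n 2) * ExteriorAlgebra.ι _ (Xc n 1)) =
      σ (Dl n 2 ![1, 1]) * Δ := by
  rw [alternant_ι_mul_ι, Dl_one_one, hcc_two_one, hcc_two_two, Xc_two, Xc_one]
  simp
  ring

theorem rootAlternant_Xc_zero_Xc_one :
    rootAlternant n (ExteriorAlgebra.ι _ (Xc n 0) * ExteriorAlgebra.ι _ (Xc n 1)) = σ (-1) * Δ := by
  rw [alternant_ι_mul_ι, Xc_zero, Xc_one]
  simp

theorem rootAlternant_ι_mul_contractLeft (i j : ℕ) :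
    rootAlternant n (ExteriorAlgebra.ι _ (Xc n i) *
        CliffordAlgebra.contractLeft (Q := (0 : QuadraticForm (B0 n) (B0 n)[X]))
          (ds n j) (wedge n 2 ![Xc n 3, Xc n 1])) =
      (if j = 1 then rootAlternant n (ExteriorAlgebra.ι _ (Xc n 3) * ExteriorAlgebra.ι _ (Xc n i))
        else 0) +
      if j = 3 then rootAlternant n (ExteriorAlgebra.ι _ (Xc n i) * ExteriorAlgebra.ι _ (Xc n 1))
        else 0 := by
  have hwedge : wedge n 2 ![Xc n 3, Xc n 1] =
      ExteriorAlgebra.ι _ (Xc n 3) * ExteriorAlgebra.ι _ (Xc n 1) := by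
    simp [wedge, ExteriorAlgebra.ιMulti_apply]
  rw [hwedge, ExteriorAlgebra.contractLeft_ι_mul_ι, ds_Xc, ds_Xc, mul_sub, mul_smul_comm,
    mul_smul_comm, map_sub, map_smul, map_smul]
  simp only [alternant_ι_mul_ι]
  split_ifs <;> simp <;> ring

end Bialternants

theorem exists_lift_table {i j : ℕ} (hi : i ≤ 3) (hj : j ≤ 3) :
    ∃ u₀ : Br 4 2,
      rootAlternant 4 (ExteriorAlgebra.ι (B0 4) (Xc 4 i) *
          CliffordAlgebra.contractLeft (Q := (0 : QuadraticForm (B0 4) (Polynomial (B0 4))))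
            (ds 4 j) (wedge 4 2 ![Xc 4 3, Xc 4 1])) =
        MvPolynomial.esymmEval (B0 4) 2 u₀ * (MvPolynomial.X 0 - MvPolynomial.X 1) ∧
      Ideal.Quotient.mk (Irn 4 2) u₀ = table i j := by
  rw [rootAlternant_ι_mul_contractLeft]
  interval_cases j
  · exact ⟨0, by simp, by simp [table]⟩
  · interval_cases i
    · exact ⟨hcc 4 2 2, by simpa using rootAlternant_Xc_three_Xc_zero 4, by simp [table]⟩
    · exact ⟨Dl 4 2 ![2, 1], by simpa using rootAlternant_Xc_three_Xc_one 4, by simp [table]⟩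
    · exact ⟨Dl 4 2 ![2, 2], by simpa using rootAlternant_Xc_three_Xc_two 4, by simp [table]⟩
    · exact ⟨0, by simp, by simp [table]⟩
  · exact ⟨0, by simp, by simp [table]⟩
  · interval_cases i
    · exact ⟨-1, by simpa using rootAlternant_Xc_zero_Xc_one 4, by simp [table]⟩
    · exact ⟨0, by simp, by simp [table]⟩
    · exact ⟨Dl 4 2 ![1, 1], by simpa using rootAlternant_Xc_two_Xc_one 4, by simp [table]⟩
    · exact ⟨Dl 4 2 ![2, 1], by simpa using rootAlternant_Xc_three_Xc_one 4, by simp [table]⟩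

/-- the explicit case n = 4, r = 2: the coefficient of zⁱw⁻ʲ of
ℰ₄(z,w⁻¹)(Δ_{(2,1)}(H_{2,4}(c))), computed as the element u of B₂(c) with
u·[X(c)]²₀ = Xⁱ(c) ∧ (∂ʲ(s) ⌟ (X³(c)∧X¹(c))), projects in B_{2,4}(c) to the
stated table; e.g. the coefficient of z²w⁻¹ is Δ_{(2,2)} = h₂(c)². -/
theorem stmt19 (act : Br 4 2 →ₐ[B0 4] Module.End (B0 4) (ExtA 4))
    (hact : ActSpec 4 2 act) :
    ∀ i j : ℕ, i ≤ 3 → j ≤ 3 → ∀ u : Br 4 2,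
      act u (wedge 4 2 ![Xc 4 1, Xc 4 0]) =
        ExteriorAlgebra.ι (B0 4) (Xc 4 i) *
          CliffordAlgebra.contractLeft
            (Q := (0 : QuadraticForm (B0 4) (Polynomial (B0 4))))
            (ds 4 j) (wedge 4 2 ![Xc 4 3, Xc 4 1]) →
      Ideal.Quotient.mk (Irn 4 2) u = table i j := by
  intro i j hi hj u hu
  obtain ⟨u₀, hu₀, hu₀_table⟩ := exists_lift_table hi hj
  rw [← hu] at hu₀
  rw [eq_of_rootAlternant_act_eq hact hu₀, hu₀_table]
end
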